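/- arXiv:1102.1409 — 6 statements merged into one kernel-verified Lean document; each statement's English description precedes it below -/
import Mathlib

section
/- For the transmission problem with coefficient ratio μ = a₊/a₋ and interior angle ω, the 4×4 determinant A(λ) = det[[-1,0,cos2πλ,sin2πλ],[0,-1,-μ sin2πλ, μ cos2πλ],[-cos λω, -sin λω, cos λω, sin λω],[sin λω, -cos λω, -μ sin λω, μ cos λω]] equals (μ²+1) sin(λω) sin(λ(2π-ω)) + 2μ(1 - cos(λω) cos(λ(2π-ω))). -/
/-!
Since `λ(2π - ω) = 2πλ - λω`, the subtraction formulas express the right-hand side through the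
cosines and sines of `λω` and `2πλ`, which are the entries of the matrix. The identity is then
polynomial in these entries, up to the two Pythagorean identities.
-/

open Complex Matrix

section TransmissionMatrix

variable {R : Type*} [CommRing R]

/-- The matrix of `A(λ)` with `μ = m`, `(c, s) = (cos λω, sin λω)` and
`(x, y) = (cos 2πλ, sin 2πλ)`. -/
def transmissionMatrix (m c s x y : R) : Matrix (Fin 4) (Fin 4) R :=
  !![-1, 0, x, y;
     0, -1, -m * y, m * x;
     -c, -s, c, s;
     s, -c, -m * s, m * c]

theorem det_transmissionMatrix (m c s x y : R) :
    (transmissionMatrix m c s x y).det =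
      (m ^ 2 + 1) * s * (y * c - x * s) +
        m * ((c ^ 2 + s ^ 2) * (1 + (x ^ 2 + y ^ 2)) - 2 * c * (x * c + y * s)) := by
  rw [transmissionMatrix, det_succ_row_zero]
  simp only [Fin.sum_univ_four, det_fin_three, submatrix_apply, Fin.succAbove, Fin.reduceLT,
    Fin.reduceCastSucc, Fin.reduceSucc, ↓reduceIte, of_apply, cons_val, Fin.coe_ofNat_eq_mod]
  ring

theorem det_transmissionMatrix_of_sq_add_sq {m c s x y : R}
    (hcs : c ^ 2 + s ^ 2 = 1) (hxy : x ^ 2 + y ^ 2 = 1) :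
    (transmissionMatrix m c s x y).det =
      (m ^ 2 + 1) * s * (y * c - x * s) + 2 * m * (1 - c * (x * c + y * s)) := by
  rw [det_transmissionMatrix, hcs, hxy]
  ring

end TransmissionMatrix

theorem mellin_symbol_determinant_general (aPlus aMinus : ℝ) (ω : ℝ) (lam : ℂ) :
    Matrix.det
      !![-1, 0, Complex.cos (2 * Real.pi * lam), Complex.sin (2 * Real.pi * lam);
         0, -1, -((aPlus : ℂ) / aMinus) * Complex.sin (2 * Real.pi * lam),
           ((aPlus : ℂ) / aMinus) * Complex.cos (2 * Real.pi * lam);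
         -Complex.cos (lam * ω), -Complex.sin (lam * ω),
           Complex.cos (lam * ω), Complex.sin (lam * ω);
         Complex.sin (lam * ω), -Complex.cos (lam * ω),
           -((aPlus : ℂ) / aMinus) * Complex.sin (lam * ω), ((aPlus : ℂ) / aMinus) * Complex.cos (lam * ω)]
    = (((aPlus : ℂ) / aMinus) ^ 2 + 1) * Complex.sin (lam * ω) * Complex.sin (lam * (2 * Real.pi - ω)) +
        2 * ((aPlus : ℂ) / aMinus) *
          (1 - Complex.cos (lam * ω) * Complex.cos (lam * (2 * Real.pi - ω))) := by
  rw [show lam * (2 * Real.pi - ω) = 2 * Real.pi * lam - lam * ω by ring, sin_sub, cos_sub]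
  exact det_transmissionMatrix_of_sq_add_sq (cos_sq_add_sin_sq _) (cos_sq_add_sin_sq _)

/-- The 4×4 determinant governing injectivity of the Mellin symbol of the transmission
problem with contrast `μ = aPlus / aMinus` and interior angle `ω`. -/
theorem mellin_symbol_determinant (aPlus aMinus : ℝ) (ha : aMinus ≠ 0) (ω : ℝ) (lam : ℂ) :
    Matrix.det
      !![-1, 0, Complex.cos (2 * Real.pi * lam), Complex.sin (2 * Real.pi * lam);
         0, -1, -((aPlus : ℂ) / aMinus) * Complex.sin (2 * Real.pi * lam),
           ((aPlus : ℂ) / aMinus) * Complex.cos (2 * Real.pi * lam);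
         -Complex.cos (lam * ω), -Complex.sin (lam * ω),
           Complex.cos (lam * ω), Complex.sin (lam * ω);
         Complex.sin (lam * ω), -Complex.cos (lam * ω),
           -((aPlus : ℂ) / aMinus) * Complex.sin (lam * ω), ((aPlus : ℂ) / aMinus) * Complex.cos (lam * ω)]
    = (((aPlus : ℂ) / aMinus) ^ 2 + 1) * Complex.sin (lam * ω) * Complex.sin (lam * (2 * Real.pi - ω)) +
        2 * ((aPlus : ℂ) / aMinus) *
          (1 - Complex.cos (lam * ω) * Complex.cos (lam * (2 * Real.pi - ω))) :=
  mellin_symbol_determinant_general aPlus aMinus ω lam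
end

section
/- Let μ be a real number with μ ≠ 1 and ω = π/2. Then for every λ ∈ ℂ with Re λ = 1, one has (μ+1) sin(λπ) ≠ ±(μ-1) sin(λ(π-ω)); equivalently the Mellin symbol determinant A(λ) = (b+c)(b-c) does not vanish on the line Re λ = 1. -/
/-!
Write `λ = 1 + iη`. Then `sin(λπ) = -i sinh(ηπ)` is purely imaginary, while
`sin(λπ/2) = cosh(ηπ/2)` is real and positive. Taking real parts, the left-hand side gives `0`
and the right-hand side gives `±(μ - 1) cosh(ηπ/2) ≠ 0`.
-/

open Complex

theorem Complex.sin_re (z : ℂ) : (sin z).re = Real.sin z.re * Real.cosh z.im := by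
  rw [sin_eq]
  simp [← ofReal_sin, ← ofReal_cos, ← ofReal_cosh, ← ofReal_sinh]

theorem Complex.sin_re_eq_zero_of_re_eq_pi {z : ℂ} (hz : z.re = Real.pi) : (sin z).re = 0 := by
  simp [sin_re, hz]

theorem Complex.sin_re_pos_of_re_eq_pi_div_two {z : ℂ} (hz : z.re = Real.pi / 2) :
    0 < (sin z).re := by
  simpa [sin_re, hz] using Real.cosh_pos z.im

/-- For real `μ ≠ 1` and `ω = π/2`, the Mellin symbol determinant does not vanish on the
line `Re λ = 1`: `(μ+1) sin(λπ) ≠ ± (μ-1) sin(λ(π-ω))`. -/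
theorem mellin_determinant_nonvanishing_on_line (μ : ℝ) (hμ : μ ≠ 1)
    (lam : ℂ) (hre : lam.re = 1) (s : ℂ) (hs : s = 1 ∨ s = -1) :
    ((μ : ℂ) + 1) * Complex.sin (lam * Real.pi) ≠
      s * (((μ : ℂ) - 1) * Complex.sin (lam * (Real.pi - Real.pi / 2))) := by
  have hsin_pi : (sin (lam * Real.pi)).re = 0 :=
    sin_re_eq_zero_of_re_eq_pi (by simp [hre])
  have hsin_pi_div_two : 0 < (sin (lam * (Real.pi - Real.pi / 2))).re :=
    sin_re_pos_of_re_eq_pi_div_two (by simp [hre]; ring)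
  intro h
  rcases hs with rfl | rfl <;>
    simpa [mul_re, hsin_pi, sub_ne_zero.mpr hμ, hsin_pi_div_two.ne'] using congrArg re h
end

section
/- Let μ < 0 with μ ≠ -1, ω = π/2. If -3 ≤ μ ≤ -1/3, then the equation (μ+1) sin(λπ) = ±(μ-1) sin(λπ/2) has no solution λ in the open strip 0 < Re λ < 1. If μ > -1/3 or μ < -3, the only solution in that strip is λ = λ₁(μ) = (2/π)·arccos(|μ-1|/(2|μ+1|)), which is real. -/
/-!
With `z = λπ/2` the strip `0 < Re λ < 1` becomes `0 < Re z < π/2`, where `sin z ≠ 0`, so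
`sin 2z = 2 sin z cos z` reduces the equation to `cos z = ±(μ-1)/(2(μ+1))`. Since
`Im (cos z) = -sin (Re z) sinh (Im z)`, a real value of `cos z` forces `z` to be real, and on
`(0, π/2)` the cosine is a bijection onto `(0, 1)`. So there is a root exactly when
`|μ-1| < 2|μ+1|`, i.e. `μ > -1/3` or `μ < -3`, and it is `z = arccos (|μ-1|/(2|μ+1|))`.
-/

open Real

namespace Complex

theorem cos_im (z : ℂ) : (cos z).im = -(Real.sin z.re * Real.sinh z.im) := by
  rw [cos_eq, ← ofReal_cos, ← ofReal_sin, ← ofReal_cosh, ← ofReal_sinh]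
  simp [sin_ofReal_re, sinh_ofReal_re]

theorem sin_ne_zero_of_re_mem_Ioo {z : ℂ} (h0 : 0 < z.re) (hπ : z.re < π) : sin z ≠ 0 := by
  rw [sin_ne_zero_iff]
  rintro k rfl
  have hk0 : (0 : ℝ) < k := by simpa [pi_pos] using h0
  have hk1 : (k : ℝ) < 1 := by simpa [pi_pos] using hπ
  norm_cast at hk0 hk1
  omega

theorem im_eq_zero_of_cos_eq_ofReal {z : ℂ} {r : ℝ} (h0 : 0 < z.re) (hπ : z.re < π)
    (h : cos z = r) : z.im = 0 := by
  have him := congrArg im h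
  rw [cos_im, ofReal_im, neg_eq_zero, mul_eq_zero] at him
  exact him.resolve_left (Real.sin_pos_of_pos_of_lt_pi h0 hπ).ne' |> Real.sinh_eq_zero.mp

theorem cos_eq_ofReal_iff {z : ℂ} {r : ℝ} (h0 : 0 < z.re) (hπ : z.re < π / 2) :
    cos z = r ↔ 0 < r ∧ r < 1 ∧ z = arccos r := by
  constructor
  · intro h
    have hz : z = (z.re : ℂ) := ext rfl (im_eq_zero_of_cos_eq_ofReal h0 (by linarith) h)
    rw [hz, ← ofReal_cos, ofReal_inj] at h
    subst h
    refine ⟨Real.cos_pos_of_mem_Ioo ⟨by linarith, hπ⟩, ?_, ?_⟩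
    · simpa using Real.cos_lt_cos_of_nonneg_of_le_pi le_rfl (by linarith) h0
    · rwa [arccos_cos h0.le (by linarith)]
  · rintro ⟨h1, h2, rfl⟩
    rw [← ofReal_cos, cos_arccos (by linarith) h2.le]

theorem exists_sign_cos_eq_iff {z : ℂ} (h0 : 0 < z.re) (hπ : z.re < π / 2) (q : ℝ) :
    (∃ s : ℂ, (s = 1 ∨ s = -1) ∧ cos z = s * q) ↔ |q| < 1 ∧ z = arccos |q| := by
  constructor
  · rintro ⟨s, rfl | rfl, h⟩
    · obtain ⟨hq0, hq1, hz⟩ := (cos_eq_ofReal_iff h0 hπ).mp (by simpa using h)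
      rw [abs_of_pos hq0]
      exact ⟨hq1, hz⟩
    · obtain ⟨hq0, hq1, hz⟩ := (cos_eq_ofReal_iff (r := -q) h0 hπ).mp (by simpa using h)
      rw [abs_of_neg (neg_pos.mp hq0)]
      exact ⟨hq1, hz⟩
  · rintro ⟨hq1, rfl⟩
    rw [← ofReal_cos, cos_arccos (by linarith [abs_nonneg q]) hq1.le]
    rcases abs_cases q with ⟨hq, _⟩ | ⟨hq, _⟩
    · exact ⟨1, Or.inl rfl, by simp [hq]⟩
    · exact ⟨-1, Or.inr rfl, by simp [hq]⟩

theorem mul_sin_two_mul_eq_iff {a b z : ℂ} (ha : a ≠ 0) (hz : sin z ≠ 0) :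
    a * sin (2 * z) = b * sin z ↔ cos z = b / (2 * a) := by
  rw [sin_two_mul, eq_div_iff (mul_ne_zero two_ne_zero ha)]
  constructor
  · intro h
    apply mul_left_cancel₀ hz
    linear_combination h
  · intro h
    linear_combination sin z * h

end Complex

theorem abs_sub_one_lt_two_mul_abs_add_one_iff (μ : ℝ) :
    |μ - 1| < 2 * |μ + 1| ↔ -1/3 < μ ∨ μ < -3 := by
  rcases abs_cases (μ - 1) with ⟨h1, _⟩ | ⟨h1, _⟩ <;>
  rcases abs_cases (μ + 1) with ⟨h2, _⟩ | ⟨h2, _⟩ <;>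
  rw [h1, h2] <;> constructor <;> intro h <;>
  first | (left; linarith) | (right; linarith) | (rcases h with h | h <;> linarith)

theorem exists_sign_mul_sin_mul_pi_eq_iff {a b : ℝ} (ha : a ≠ 0) {lam : ℂ}
    (h0 : 0 < lam.re) (h1 : lam.re < 1) :
    (∃ s : ℂ, (s = 1 ∨ s = -1) ∧
        (a : ℂ) * Complex.sin (lam * π) = s * ((b : ℂ) * Complex.sin (lam * π / 2))) ↔
      |b / (2 * a)| < 1 ∧ lam = ((2 / π * arccos |b / (2 * a)| : ℝ) : ℂ) := by
  have hre : (lam * π / 2).re = lam.re * π / 2 := by simp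
  have hz0 : 0 < (lam * π / 2).re := by rw [hre]; positivity
  have hz1 : (lam * π / 2).re < π / 2 := by rw [hre]; nlinarith [pi_pos]
  have hsin := Complex.sin_ne_zero_of_re_mem_Ioo hz0 (by linarith [pi_pos])
  have hlam : lam * π / 2 = arccos |b / (2 * a)| ↔
      lam = ((2 / π * arccos |b / (2 * a)| : ℝ) : ℂ) := by
    push_cast
    constructor <;> intro h <;> field_simp at h ⊢ <;> linear_combination h
  rw [← hlam, ← Complex.exists_sign_cos_eq_iff hz0 hz1]
  refine exists_congr fun s => and_congr_right fun _ => ?_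
  have hlam2 : lam * π = 2 * (lam * π / 2) := by ring
  generalize lam * π / 2 = z at hsin hlam2 ⊢
  rw [hlam2, ← mul_assoc, Complex.mul_sin_two_mul_eq_iff (by exact_mod_cast ha) hsin]
  push_cast
  ring_nf

theorem mellin_spectrum_in_strip_general (μ : ℝ) (hμ : μ ≠ -1) :
    ((-3 ≤ μ ∧ μ ≤ -1/3) →
      ∀ lam : ℂ, 0 < lam.re → lam.re < 1 →
        ∀ s : ℂ, s = 1 ∨ s = -1 →
          ((μ : ℂ) + 1) * Complex.sin (lam * Real.pi) ≠
            s * (((μ : ℂ) - 1) * Complex.sin (lam * Real.pi / 2))) ∧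
    ((-1/3 < μ ∨ μ < -3) →
      ∀ lam : ℂ, 0 < lam.re → lam.re < 1 →
        ((∃ s : ℂ, (s = 1 ∨ s = -1) ∧
            ((μ : ℂ) + 1) * Complex.sin (lam * Real.pi) =
              s * (((μ : ℂ) - 1) * Complex.sin (lam * Real.pi / 2))) ↔
          lam = (((2 / Real.pi) * Real.arccos (|μ - 1| / (2 * |μ + 1|)) : ℝ) : ℂ))) := by
  have hμ1 : μ + 1 ≠ 0 := fun h => hμ (by linarith)
  have hq : |(μ - 1) / (2 * (μ + 1))| = |μ - 1| / (2 * |μ + 1|) := by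
    rw [abs_div, abs_mul, abs_two]
  have hstrip : |μ - 1| / (2 * |μ + 1|) < 1 ↔ -1/3 < μ ∨ μ < -3 := by
    rw [div_lt_one (by positivity [abs_pos.mpr hμ1]), abs_sub_one_lt_two_mul_abs_add_one_iff]
  have hroots : ∀ lam : ℂ, 0 < lam.re → lam.re < 1 →
      ((∃ s : ℂ, (s = 1 ∨ s = -1) ∧ ((μ : ℂ) + 1) * Complex.sin (lam * π) =
          s * (((μ : ℂ) - 1) * Complex.sin (lam * π / 2))) ↔
        |μ - 1| / (2 * |μ + 1|) < 1 ∧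
          lam = ((2 / π * arccos (|μ - 1| / (2 * |μ + 1|)) : ℝ) : ℂ)) := by
    intro lam h0 h1
    rw [← hq]
    exact_mod_cast exists_sign_mul_sin_mul_pi_eq_iff (b := μ - 1) hμ1 h0 h1
  refine ⟨fun hcase lam h0 h1 s hs heq => ?_, fun hcase lam h0 h1 => ?_⟩
  · rcases hstrip.mp ((hroots lam h0 h1).mp ⟨s, hs, heq⟩).1 with h | h <;>
      linarith [hcase.1, hcase.2]
  · rw [hroots lam h0 h1, and_iff_right (hstrip.mpr hcase)]

/-- Mellin spectrum of the right-angle transmission corner in the strip `0 < Re λ < 1`: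
for `-3 ≤ μ ≤ -1/3` the characteristic equation `(μ+1) sin λπ = ±(μ-1) sin(λπ/2)`
has no root there; otherwise its only root there is the real number
`λ₁(μ) = (2/π) arccos(|μ-1|/(2|μ+1|))`. -/
theorem mellin_spectrum_in_strip (μ : ℝ) (hneg : μ < 0) (hμ : μ ≠ -1) :
    ((-3 ≤ μ ∧ μ ≤ -1/3) →
      ∀ lam : ℂ, 0 < lam.re → lam.re < 1 →
        ∀ s : ℂ, s = 1 ∨ s = -1 →
          ((μ : ℂ) + 1) * Complex.sin (lam * Real.pi) ≠
            s * (((μ : ℂ) - 1) * Complex.sin (lam * Real.pi / 2))) ∧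
    ((-1/3 < μ ∨ μ < -3) →
      ∀ lam : ℂ, 0 < lam.re → lam.re < 1 →
        ((∃ s : ℂ, (s = 1 ∨ s = -1) ∧
            ((μ : ℂ) + 1) * Complex.sin (lam * Real.pi) =
              s * (((μ : ℂ) - 1) * Complex.sin (lam * Real.pi / 2))) ↔
          lam = (((2 / Real.pi) * Real.arccos (|μ - 1| / (2 * |μ + 1|)) : ℝ) : ℂ))) :=
  mellin_spectrum_in_strip_general μ hμ
end

section
/- Let μ < 0, μ ≠ -1, ω = π/2. Then λ = 0 is a root of A(λ) = ((μ+1)sin λπ)² − ((μ-1)sin(λπ/2))², and every root λ of A with Re λ = 0 satisfies: either λ = 0, or -3 < μ < -1/3 and λ = ± i η for η = (2/π) arccosh(|μ-1|/(2|μ+1|)). -/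
/-- `arcosh ρ` is the nonnegative real number `s` with `cosh s = ρ` (for `ρ ≥ 1`). -/
noncomputable def arcosh (x : ℝ) : ℝ := Real.log (x + Real.sqrt (x ^ 2 - 1))

lemma arcosh_nonneg {x : ℝ} (hx : 1 ≤ x) : 0 ≤ arcosh x := by
  apply Real.log_nonneg
  have := Real.sqrt_nonneg (x ^ 2 - 1)
  linarith

lemma cosh_arcosh {x : ℝ} (hx : 1 ≤ x) : Real.cosh (arcosh x) = x := by
  have h1 : (0:ℝ) ≤ x ^ 2 - 1 := by nlinarith
  have hsq : Real.sqrt (x ^ 2 - 1) ^ 2 = x ^ 2 - 1 := Real.sq_sqrt h1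
  have hs := Real.sqrt_nonneg (x ^ 2 - 1)
  have hu : (0:ℝ) < x + Real.sqrt (x ^ 2 - 1) := by linarith
  have hinv : (x + Real.sqrt (x ^ 2 - 1))⁻¹ = x - Real.sqrt (x ^ 2 - 1) :=
    inv_eq_of_mul_eq_one_right (by nlinarith)
  rw [arcosh, Real.cosh_eq, Real.exp_neg, Real.exp_log hu, hinv]
  ring

/-- Roots of the factorized Mellin determinant
`A(λ) = ((μ+1) sin λπ)² − ((μ-1) sin(λπ/2))²` on the imaginary axis: `λ = 0` is always a
root, and any other imaginary root occurs only for `-3 < μ < -1/3` and equals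
`± i η(μ)` with `η(μ) = (2/π) arccosh(|μ-1|/(2|μ+1|))`. -/
theorem mellin_determinant_imaginary_roots (μ : ℝ) (hneg : μ < 0) (hμ : μ ≠ -1) :
    (((μ : ℂ) + 1) * Complex.sin (0 * Real.pi)) ^ 2 -
        (((μ : ℂ) - 1) * Complex.sin (0 * Real.pi / 2)) ^ 2 = 0 ∧
    ∀ lam : ℂ, lam.re = 0 →
      (((μ : ℂ) + 1) * Complex.sin (lam * Real.pi)) ^ 2 -
          (((μ : ℂ) - 1) * Complex.sin (lam * Real.pi / 2)) ^ 2 = 0 →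
      (lam = 0 ∨
        (-3 < μ ∧ μ < -1/3 ∧
          (lam = Complex.I * ((2 / Real.pi) * arcosh (|μ - 1| / (2 * |μ + 1|)) : ℝ) ∨
            lam = -(Complex.I * ((2 / Real.pi) * arcosh (|μ - 1| / (2 * |μ + 1|)) : ℝ))))) := by
  have hπ : (0:ℝ) < Real.pi := Real.pi_pos
  constructor
  · simp
  intro lam hre heq
  set t : ℝ := lam.im with ht
  have hlam : lam = (t : ℂ) * Complex.I := by
    apply Complex.ext <;> simp [hre, ht]
  have h1 : lam * (Real.pi : ℂ) = ((t * Real.pi : ℝ) : ℂ) * Complex.I := by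
    rw [hlam]; push_cast; ring
  have h2 : lam * (Real.pi : ℂ) / 2 = ((t * Real.pi / 2 : ℝ) : ℂ) * Complex.I := by
    rw [hlam]; push_cast; ring
  rw [h2, h1, Complex.sin_mul_I, Complex.sin_mul_I, ← Complex.ofReal_sinh,
    ← Complex.ofReal_sinh] at heq
  set s : ℝ := t * Real.pi / 2 with hsdef
  have hts : t * Real.pi = 2 * s := by rw [hsdef]; ring
  rw [hts] at heq
  have key : (μ + 1) ^ 2 * Real.sinh (2 * s) ^ 2 = (μ - 1) ^ 2 * Real.sinh s ^ 2 := by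
    have : (((μ + 1) ^ 2 * Real.sinh (2 * s) ^ 2 : ℝ) : ℂ) =
        (((μ - 1) ^ 2 * Real.sinh s ^ 2 : ℝ) : ℂ) := by
      push_cast at heq ⊢
      linear_combination -heq + (((μ:ℂ) + 1) ^ 2 * Complex.sinh (2 * (s:ℂ)) ^ 2 -
        ((μ:ℂ) - 1) ^ 2 * Complex.sinh (s:ℂ) ^ 2) * Complex.I_sq
    exact_mod_cast this
  rw [Real.sinh_two_mul] at key
  by_cases hs0 : s = 0
  · left
    have : t = 0 := by
      have := hts; rw [hs0] at this
      have := mul_eq_zero.mp (by linarith : t * Real.pi = 0)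
      rcases this with h | h
      · exact h
      · exact absurd h (ne_of_gt hπ)
    rw [hlam, this]; simp
  · right
    have hsinh : Real.sinh s ≠ 0 := Real.sinh_ne_zero.mpr hs0
    have hμ1 : μ + 1 ≠ 0 := fun h => hμ (by linarith)
    have habs1 : |μ + 1| > 0 := abs_pos.mpr hμ1
    have hcoshpos : 0 < Real.cosh s := Real.cosh_pos s
    -- 4 (μ+1)² cosh² s = (μ-1)²
    have key2 : (2 * |μ + 1| * Real.cosh s) ^ 2 = |μ - 1| ^ 2 := by
      have h4 : 4 * (μ + 1) ^ 2 * Real.cosh s ^ 2 = (μ - 1) ^ 2 := by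
        apply mul_right_cancel₀ (pow_ne_zero 2 hsinh)
        linear_combination key
      have e1 : |μ + 1| ^ 2 = (μ + 1) ^ 2 := sq_abs _
      have e2 : |μ - 1| ^ 2 = (μ - 1) ^ 2 := sq_abs _
      nlinarith
    have key3 : 2 * |μ + 1| * Real.cosh s = |μ - 1| := by
      have h := (sq_eq_sq_iff_abs_eq_abs _ _).mp key2
      rwa [abs_of_pos (by positivity), abs_abs] at h
    -- ρ
    set ρ : ℝ := |μ - 1| / (2 * |μ + 1|) with hρdef
    have hcoshρ : Real.cosh s = ρ := by
      rw [hρdef]; field_simp; linarith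
    have hone : 1 < Real.cosh s := by
      have : Real.cosh 0 < Real.cosh s := Real.cosh_lt_cosh.mpr (by simpa using abs_pos.mpr hs0)
      simpa using this
    have hρ1 : 1 < ρ := hcoshρ ▸ hone
    have habsμ1 : |μ - 1| = 1 - μ := by rw [abs_of_neg (by linarith)]; ring
    -- range of μ
    have hrange : -3 < μ ∧ μ < -1/3 := by
      have h2abs : 2 * |μ + 1| < 1 - μ := by
        rw [hρdef, lt_div_iff₀ (by positivity), one_mul] at hρ1
        rw [habsμ1] at hρ1; linarith
      rcases abs_cases (μ + 1) with ⟨h, h'⟩ | ⟨h, h'⟩ <;> rw [h] at h2abs <;>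
        constructor <;> linarith
    refine ⟨hrange.1, hrange.2, ?_⟩
    -- |s| = arcosh ρ
    have hρle : 1 ≤ ρ := le_of_lt hρ1
    have hsabs : |s| = arcosh ρ := by
      apply Real.cosh_strictMonoOn.injOn (abs_nonneg s) (arcosh_nonneg hρle)
      rw [Real.cosh_abs, hcoshρ, cosh_arcosh hρle]
    have hteq : t = 2 / Real.pi * s := by
      field_simp [hsdef]
      ring
    rcases abs_eq (arcosh_nonneg hρle) |>.mp hsabs with h | h
    · left
      rw [hlam, hteq, h]; push_cast; ring
    · right
      rw [hlam, hteq, h]; push_cast; ring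
end

section
/- Let μ ∈ ℝ, μ ≠ -1, ω = π/2. For λ = iη with η ∈ ℝ, η ≠ 0, the equation (μ+1) sin(iηπ) = ±(μ-1) sin(iηπ/2) is equivalent to cosh(ηπ/2) = ±(μ-1)/(2(μ+1)), and it admits a real solution η ≠ 0 if and only if |μ-1|/(2|μ+1|) > 1, i.e. iff -3 < μ < -1/3. -/
private lemma sin_I_mul (x : ℝ) :
    Complex.sin (Complex.I * x) = (Real.sinh x : ℂ) * Complex.I := by
  rw [show Complex.I * (x:ℂ) = (x:ℂ) * Complex.I by ring, Complex.sin_mul_I,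
    Complex.ofReal_sinh]

private lemma key_iff (μ : ℝ) (hμ : μ ≠ -1) (η : ℝ) (hη : η ≠ 0) (s : ℂ) :
    (((μ : ℂ) + 1) * Complex.sin (Complex.I * η * Real.pi) =
          s * (((μ : ℂ) - 1) * Complex.sin (Complex.I * η * Real.pi / 2)) ↔
        (Real.cosh (η * Real.pi / 2) : ℂ) = s * (((μ : ℂ) - 1) / (2 * ((μ : ℂ) + 1)))) := by
  have hμC : (μ : ℂ) + 1 ≠ 0 := by
    intro h
    apply hμ
    have : (μ : ℂ) = -1 := by linear_combination h
    exact_mod_cast this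
  have hπ : Real.pi ≠ 0 := Real.pi_ne_zero
  have hA : Real.sinh (η * Real.pi / 2) ≠ 0 :=
    Real.sinh_ne_zero.2 (by simp [hη, hπ])
  have hAC : (Real.sinh (η * Real.pi / 2) : ℂ) ≠ 0 := by exact_mod_cast hA
  have e1 : Complex.sin (Complex.I * η * Real.pi) =
      2 * (Real.sinh (η * Real.pi / 2) : ℂ) * (Real.cosh (η * Real.pi / 2) : ℂ) * Complex.I := by
    rw [show Complex.I * (η:ℂ) * (Real.pi:ℂ) = Complex.I * ((η * Real.pi : ℝ) : ℂ) by
      push_cast; ring, sin_I_mul,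
      show η * Real.pi = 2 * (η * Real.pi / 2) by ring, Real.sinh_two_mul]
    push_cast
    ring
  have e2 : Complex.sin (Complex.I * η * Real.pi / 2) =
      (Real.sinh (η * Real.pi / 2) : ℂ) * Complex.I := by
    rw [show Complex.I * (η:ℂ) * (Real.pi:ℂ) / 2 = Complex.I * ((η * Real.pi / 2 : ℝ) : ℂ) by
      push_cast; ring, sin_I_mul]
  rw [e1, e2]
  set A : ℂ := (Real.sinh (η * Real.pi / 2) : ℂ)
  set C : ℂ := (Real.cosh (η * Real.pi / 2) : ℂ)
  constructor
  · intro h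
    have h2 : C * (2 * ((μ:ℂ) + 1)) * (A * Complex.I) =
        (s * ((μ:ℂ) - 1)) * (A * Complex.I) := by linear_combination h
    have h3 := mul_right_cancel₀ (mul_ne_zero hAC Complex.I_ne_zero) h2
    field_simp
    linear_combination h3
  · intro h
    have h3 : C * (2 * ((μ:ℂ) + 1)) = s * ((μ:ℂ) - 1) := by
      field_simp at h
      linear_combination h
    linear_combination (A * Complex.I) * h3

/-- On the imaginary axis `λ = iη`, `η ≠ 0`, the characteristic equation
`(μ+1) sin(iηπ) = ±(μ-1) sin(iηπ/2)` is equivalent to `cosh(ηπ/2) = ±(μ-1)/(2(μ+1))`,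
and it has a nonzero real solution `η` iff `|μ-1|/(2|μ+1|) > 1`, iff `-3 < μ < -1/3`. -/
theorem imaginary_spectrum_characterization (μ : ℝ) (hμ : μ ≠ -1) :
    (∀ η : ℝ, η ≠ 0 → ∀ s : ℂ, s = 1 ∨ s = -1 →
      (((μ : ℂ) + 1) * Complex.sin (Complex.I * η * Real.pi) =
          s * (((μ : ℂ) - 1) * Complex.sin (Complex.I * η * Real.pi / 2)) ↔
        (Real.cosh (η * Real.pi / 2) : ℂ) = s * (((μ : ℂ) - 1) / (2 * ((μ : ℂ) + 1))))) ∧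
    ((∃ η : ℝ, η ≠ 0 ∧ ∃ s : ℂ, (s = 1 ∨ s = -1) ∧
        ((μ : ℂ) + 1) * Complex.sin (Complex.I * η * Real.pi) =
          s * (((μ : ℂ) - 1) * Complex.sin (Complex.I * η * Real.pi / 2))) ↔
      1 < |μ - 1| / (2 * |μ + 1|)) ∧
    (1 < |μ - 1| / (2 * |μ + 1|) ↔ (-3 < μ ∧ μ < -1/3)) := by
  have hμ1 : μ + 1 ≠ 0 := by intro h; apply hμ; linarith
  have habs : (0:ℝ) < 2 * |μ + 1| := by positivity
  have hπ : (0:ℝ) < Real.pi := Real.pi_pos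
  refine ⟨fun η hη s _ => key_iff μ hμ η hη s, ?_, ?_⟩
  · -- existence iff 1 < |μ-1|/(2|μ+1|)
    have hval : |μ - 1| / (2 * |μ + 1|) = |(μ - 1) / (2 * (μ + 1))| := by
      rw [abs_div, abs_mul, abs_two]
    constructor
    · rintro ⟨η, hη, s, hs, heq⟩
      rw [key_iff μ hμ η hη s] at heq
      set r : ℝ := (μ - 1) / (2 * (μ + 1)) with hr
      have hrc : s * (((μ : ℂ) - 1) / (2 * ((μ : ℂ) + 1))) = s * (r : ℂ) := by
        push_cast [hr]; ring_nf
      rw [hrc] at heq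
      have hco : 1 < Real.cosh (η * Real.pi / 2) :=
        Real.one_lt_cosh.2 (by positivity)
      rw [hval]
      rcases hs with h1 | h1 <;> subst h1
      · have : Real.cosh (η * Real.pi / 2) = r := by
          exact_mod_cast heq.trans (one_mul _)
        calc (1:ℝ) < Real.cosh (η * Real.pi / 2) := hco
          _ = r := this
          _ ≤ |r| := le_abs_self r
      · have : Real.cosh (η * Real.pi / 2) = -r := by
          have : (Real.cosh (η * Real.pi / 2) : ℂ) = ((-r : ℝ) : ℂ) := by
            rw [heq]; push_cast; ring
          exact_mod_cast this
        calc (1:ℝ) < Real.cosh (η * Real.pi / 2) := hco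
          _ = -r := this
          _ ≤ |r| := neg_le_abs r
    · intro hgt
      set r : ℝ := (μ - 1) / (2 * (μ + 1)) with hr
      have hgt' : 1 < |r| := by rwa [hval] at hgt
      -- choose t with cosh t = |r|, t ≠ 0
      set x : ℝ := Real.sqrt (|r| ^ 2 - 1) with hx
      have hxpos : 0 < x := Real.sqrt_pos.2 (by nlinarith)
      set t : ℝ := Real.arsinh x with ht
      have htpos : 0 < t := Real.arsinh_pos_iff.2 hxpos
      have hct : Real.cosh t = |r| := by
        rw [ht, Real.cosh_arsinh, hx, Real.sq_sqrt (by nlinarith)]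
        rw [show 1 + (|r|^2 - 1) = |r|^2 by ring]
        rw [Real.sqrt_sq (by positivity)]
      refine ⟨2 * t / Real.pi, by positivity, ?_⟩
      have harg : 2 * t / Real.pi * Real.pi / 2 = t := by field_simp
      by_cases hrpos : 0 ≤ r
      · refine ⟨1, Or.inl rfl, ?_⟩
        rw [key_iff μ hμ _ (by positivity) 1, harg, hct, one_mul,
          abs_of_nonneg hrpos]
        push_cast [hr]
        ring
      · refine ⟨-1, Or.inr rfl, ?_⟩
        rw [key_iff μ hμ _ (by positivity) (-1), harg, hct,
          abs_of_neg (lt_of_not_ge hrpos)]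
        push_cast [hr]
        ring
  · -- interval characterization
    rw [lt_div_iff₀ habs, one_mul, show 2 * |μ + 1| = |2 * μ + 2| by
      rw [show (2:ℝ) * μ + 2 = 2 * (μ + 1) by ring, abs_mul, abs_two], ← sq_lt_sq]
    constructor
    · intro h
      constructor <;> nlinarith
    · rintro ⟨h1, h2⟩
      nlinarith
end

section
/- Fix λ ∈ ℂ and μ ≠ 0. Suppose W₋(θ) = α₋ cos(λθ) + β₋ sin(λθ) on (0, π/2) and W₊(θ) = α₊ cos(λθ) + β₊ sin(λθ) on (π/2, 2π) satisfy W₊(2π) = W₋(0), μW₊'(2π) = W₋'(0), W₊(π/2) = W₋(π/2), μW₊'(π/2) = W₋'(π/2). Then the coefficient vector (α₋, β₋, α₊, β₊) lies in a nontrivial kernel iff (μ²+1) sin(λπ/2) sin(3λπ/2) + 2μ(1 - cos(λπ/2) cos(3λπ/2)) = 0. -/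
/-!
The first two transmission conditions express `(α₋, β₋)` through `(α₊, β₊)`, so the kernel is
that of a `2 × 2` system in `(α₊, β₊)`. With `A = λπ/2`, `B = 3λπ/2`, `D = diag(1, μ)` and
`R_θ` the rotation by `θ`, this system is `(D R_A - R_A D R_{A+B}) (α₊, β₊) = 0`, whose
determinant equals `det (D - R_A D R_B) = 2μ - 2μ cos A cos B + (μ² + 1) sin A sin B`.
-/

open Complex

theorem exists_nontrivial_solution_fin_two_iff {K : Type*} [Field K] (a b c d : K) :
    (∃ x y : K, ¬(x = 0 ∧ y = 0) ∧ a * x + b * y = 0 ∧ c * x + d * y = 0) ↔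
      a * d - b * c = 0 := by
  rw [← Matrix.det_fin_two_of, ← Matrix.exists_mulVec_eq_zero_iff]
  simp only [ne_eq, funext_iff, Fin.forall_fin_two, Matrix.mulVec, dotProduct, Fin.sum_univ_two]
  constructor
  · rintro ⟨x, y, hne, h₁, h₂⟩
    exact ⟨![x, y], by simpa using hne, by simpa using h₁, by simpa using h₂⟩
  · rintro ⟨v, hne, h₁, h₂⟩
    exact ⟨v 0, v 1, by simpa using hne, by simpa using h₁, by simpa using h₂⟩

theorem reduced_transmission_det (μ A B : ℂ) :
    (cos A - cos (A + B) * cos A + μ * sin (A + B) * sin A) *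
        (μ * cos A + sin (A + B) * sin A - μ * cos (A + B) * cos A) -
      (sin A - sin (A + B) * cos A - μ * cos (A + B) * sin A) *
        (-μ * sin A + cos (A + B) * sin A + μ * sin (A + B) * cos A) =
      (μ ^ 2 + 1) * sin A * sin B + 2 * μ * (1 - cos A * cos B) := by
  rw [cos_add, sin_add]
  linear_combination
    (sin A * sin B * (1 + μ ^ 2) - 2 * cos A * cos B * μ + μ * (sin A ^ 2 + cos A ^ 2 + 2)) *
      sin_sq_add_cos_sq A + μ * (sin A ^ 2 + cos A ^ 2) ^ 2 * sin_sq_add_cos_sq B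

theorem transmission_kernel_iff (μ A B : ℂ) :
    (∃ aM bM aP bP : ℂ, ¬(aM = 0 ∧ bM = 0 ∧ aP = 0 ∧ bP = 0) ∧
      aP * cos (A + B) + bP * sin (A + B) = aM ∧
      μ * (-aP * sin (A + B) + bP * cos (A + B)) = bM ∧
      aP * cos A + bP * sin A = aM * cos A + bM * sin A ∧
      μ * (-aP * sin A + bP * cos A) = -aM * sin A + bM * cos A) ↔
    (μ ^ 2 + 1) * sin A * sin B + 2 * μ * (1 - cos A * cos B) = 0 := by
  rw [← reduced_transmission_det, ← exists_nontrivial_solution_fin_two_iff]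
  constructor
  · rintro ⟨aM, bM, aP, bP, hne, rfl, rfl, h₁, h₂⟩
    refine ⟨aP, bP, fun ⟨haP, hbP⟩ => hne ⟨by simp [haP, hbP], by simp [haP, hbP], haP, hbP⟩,
      by linear_combination h₁, by linear_combination h₂⟩
  · rintro ⟨aP, bP, hne, h₁, h₂⟩
    exact ⟨_, _, aP, bP, fun h => hne h.2.2, rfl, rfl,
      by linear_combination h₁, by linear_combination h₂⟩

theorem angular_kernel_iff_determinant_general (lam μ : ℂ) :
    (∃ aM bM aP bP : ℂ, ¬(aM = 0 ∧ bM = 0 ∧ aP = 0 ∧ bP = 0) ∧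
      -- W₊(2π) = W₋(0)
      aP * Complex.cos (lam * (2 * Real.pi)) + bP * Complex.sin (lam * (2 * Real.pi)) =
        aM * Complex.cos (lam * 0) + bM * Complex.sin (lam * 0) ∧
      -- μ W₊'(2π) = W₋'(0)
      μ * (lam * (-aP * Complex.sin (lam * (2 * Real.pi)) +
            bP * Complex.cos (lam * (2 * Real.pi)))) =
        lam * (-aM * Complex.sin (lam * 0) + bM * Complex.cos (lam * 0)) ∧
      -- W₊(π/2) = W₋(π/2)
      aP * Complex.cos (lam * (Real.pi / 2)) + bP * Complex.sin (lam * (Real.pi / 2)) =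
        aM * Complex.cos (lam * (Real.pi / 2)) + bM * Complex.sin (lam * (Real.pi / 2)) ∧
      -- μ W₊'(π/2) = W₋'(π/2)
      μ * (lam * (-aP * Complex.sin (lam * (Real.pi / 2)) +
            bP * Complex.cos (lam * (Real.pi / 2)))) =
        lam * (-aM * Complex.sin (lam * (Real.pi / 2)) +
          bM * Complex.cos (lam * (Real.pi / 2)))) ↔
    (μ ^ 2 + 1) * Complex.sin (lam * Real.pi / 2) * Complex.sin (3 * lam * Real.pi / 2) +
        2 * μ * (1 - Complex.cos (lam * Real.pi / 2) * Complex.cos (3 * lam * Real.pi / 2))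
      = 0 := by
  rcases eq_or_ne lam 0 with rfl | hlam
  · exact iff_of_true ⟨0, 1, 0, 1, by norm_num, by simp, by simp, by simp, by simp⟩ (by simp)
  · have h2π : lam * (2 * Real.pi) = lam * Real.pi / 2 + 3 * lam * Real.pi / 2 := by ring
    have hπ2 : lam * (Real.pi / 2) = lam * Real.pi / 2 := by ring
    simp only [h2π, hπ2, mul_zero, cos_zero, sin_zero, mul_one, add_zero, zero_add,
      mul_left_comm μ lam, mul_right_inj' hlam]
    exact transmission_kernel_iff μ _ _

/-- Angular homogeneous solutions `W₋(θ) = α₋ cos λθ + β₋ sin λθ` on `(0, π/2)` and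
`W₊(θ) = α₊ cos λθ + β₊ sin λθ` on `(π/2, 2π)` satisfying the transmission conditions
`W₊(2π) = W₋(0)`, `μW₊'(2π) = W₋'(0)`, `W₊(π/2) = W₋(π/2)`, `μW₊'(π/2) = W₋'(π/2)`
have a nontrivial coefficient vector `(α₋, β₋, α₊, β₊)` iff
`(μ²+1) sin(λπ/2) sin(3λπ/2) + 2μ(1 - cos(λπ/2) cos(3λπ/2)) = 0`. -/
theorem angular_kernel_iff_determinant (lam μ : ℂ) (hμ : μ ≠ 0) :
    (∃ aM bM aP bP : ℂ, ¬(aM = 0 ∧ bM = 0 ∧ aP = 0 ∧ bP = 0) ∧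
      -- W₊(2π) = W₋(0)
      aP * Complex.cos (lam * (2 * Real.pi)) + bP * Complex.sin (lam * (2 * Real.pi)) =
        aM * Complex.cos (lam * 0) + bM * Complex.sin (lam * 0) ∧
      -- μ W₊'(2π) = W₋'(0)
      μ * (lam * (-aP * Complex.sin (lam * (2 * Real.pi)) +
            bP * Complex.cos (lam * (2 * Real.pi)))) =
        lam * (-aM * Complex.sin (lam * 0) + bM * Complex.cos (lam * 0)) ∧
      -- W₊(π/2) = W₋(π/2)
      aP * Complex.cos (lam * (Real.pi / 2)) + bP * Complex.sin (lam * (Real.pi / 2)) =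
        aM * Complex.cos (lam * (Real.pi / 2)) + bM * Complex.sin (lam * (Real.pi / 2)) ∧
      -- μ W₊'(π/2) = W₋'(π/2)
      μ * (lam * (-aP * Complex.sin (lam * (Real.pi / 2)) +
            bP * Complex.cos (lam * (Real.pi / 2)))) =
        lam * (-aM * Complex.sin (lam * (Real.pi / 2)) +
          bM * Complex.cos (lam * (Real.pi / 2)))) ↔
    (μ ^ 2 + 1) * Complex.sin (lam * Real.pi / 2) * Complex.sin (3 * lam * Real.pi / 2) +
        2 * μ * (1 - Complex.cos (lam * Real.pi / 2) * Complex.cos (3 * lam * Real.pi / 2))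
      = 0 :=
  angular_kernel_iff_determinant_general lam μ
end
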